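/- arXiv:1208.4484 — 4 statements merged into one kernel-verified Lean document; each statement's English description precedes it below -/
import Mathlib

section
/- Let P be a finite set of points of the Euclidean plane E, and suppose there is an isometry equivalence σ : E ≃ᵢ E such that the image of P under σ is again P, while σ p ≠ p for at least one point p ∈ P. Then no ordering function exists; that is, there is no map F : Finset E → List E such that (i) for every finite set Q the list F Q has no duplicate entries and its entries are exactly the elements of Q, and (ii) for every isometry equivalence τ : E ≃ᵢ E and every finite set Q one has F (Q.image τ) = (F Q).map τ. -/
noncomputable abbrev E : Type := EuclideanSpace ℝ (Fin 2)

noncomputable instance : DecidableEq E := Classical.decEq _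

lemma map_eq_self_fixes {α : Type*} (f : α → α) :
    ∀ l : List α, l.map f = l → ∀ x ∈ l, f x = x := by
  intro l
  induction l with
  | nil => intro _ x hx; simp at hx
  | cons a t ih =>
    intro h x hx
    simp only [List.map_cons, List.cons.injEq] at h
    rcases List.mem_cons.mp hx with hx | hx
    · exact hx ▸ h.1
    · exact ih h.2 x hx

/-- A finite set of points of the Euclidean plane that is mapped onto itself by an isometry
moving at least one of its points is not orderable: there is no ordering function `F`
assigning to every finite set a duplicate-free list of exactly its elements, equivariantly
under all isometries. -/
theorem symmetric_configuration_not_orderable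
    (P : Finset E) (σ : E ≃ᵢ E) (hP : P.image σ = P)
    (p : E) (hp : p ∈ P) (hmove : σ p ≠ p) :
    ¬ ∃ F : Finset E → List E,
        (∀ Q : Finset E, (F Q).Nodup ∧ ∀ x : E, x ∈ F Q ↔ x ∈ Q) ∧
        (∀ (τ : E ≃ᵢ E) (Q : Finset E), F (Q.image τ) = (F Q).map τ) := by
  rintro ⟨F, hF, hEq⟩
  have h := hEq σ P
  rw [hP] at h
  have hfix := map_eq_self_fixes (⇑σ) (F P) h.symm p
    (((hF P).2 p).mpr hp)
  exact hmove hfix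
end

section
/- Let o, a, b, c, d be points of the Euclidean plane E with dist o a = dist o b = dist o c = dist o d (the four points lie on a common circle centered at o), suppose b − a = c − d (the chords from a to b and from d to c are parallel and of equal length), and suppose a, b, c are not collinear. Then midpoint ℝ a c = o and midpoint ℝ b d = o (both segments a–c and b–d are diameters of the circle), dist a c = dist b d, and the inner product ⟪a − b, c − b⟫ = 0, so that a, b, c, d are the vertices of a rectangle inscribed in the circle with a–c and b–d as diagonals. -/
namespace EuclideanGeometry

variable {V P : Type*} [NormedAddCommGroup V] [InnerProductSpace ℝ V] [MetricSpace P]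
  [NormedAddTorsor V P]

theorem Sphere.dist_eq_dist_of_midpoint_eq {s : Sphere P} {p₁ p₂ q₁ q₂ : P} (hp₁ : p₁ ∈ s)
    (hp₂ : p₂ ∈ s) (hq₁ : q₁ ∈ s) (hq₂ : q₂ ∈ s)
    (hm : midpoint ℝ p₁ p₂ = midpoint ℝ q₁ q₂) : dist p₁ p₂ = dist q₁ q₂ := by
  have hp := dist_sq_add_dist_sq_eq_two_mul_dist_midpoint_sq_add_half_dist_sq s.center p₁ p₂
  have hq := dist_sq_add_dist_sq_eq_two_mul_dist_midpoint_sq_add_half_dist_sq s.center q₁ q₂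
  rw [mem_sphere'.1 hp₁, mem_sphere'.1 hp₂, hm] at hp
  rw [mem_sphere'.1 hq₁, mem_sphere'.1 hq₂] at hq
  have h_half : (dist p₁ p₂ / 2) ^ 2 = (dist q₁ q₂ / 2) ^ 2 := by linarith
  linarith [(sq_eq_sq₀ (by positivity) (by positivity)).1 h_half]

theorem Sphere.isDiameter_of_midpoint_eq_of_not_collinear [FiniteDimensional ℝ V]
    (hdim : Module.finrank ℝ V = 2) {s : Sphere P} {a b c d : P} (ha : a ∈ s) (hb : b ∈ s)
    (hc : c ∈ s) (hd : d ∈ s) (hm : midpoint ℝ b d = midpoint ℝ a c)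
    (habc : ¬Collinear ℝ ({a, b, c} : Set P)) : s.IsDiameter a c := by
  have hb' : b ∈ Sphere.ofDiameter a c := by
    rw [mem_sphere]
    change dist b (midpoint ℝ a c) = dist a c / 2
    rw [← hm, dist_left_midpoint, Real.norm_two, inv_mul_eq_div,
      Sphere.dist_eq_dist_of_midpoint_eq hb hd ha hc hm]
  rw [Sphere.isDiameter_iff_ofDiameter_eq]
  by_contra hne
  have hac := Sphere.isDiameter_ofDiameter a c
  rcases eq_of_mem_sphere_of_mem_sphere_of_finrank_eq_two hdim hne (ne₁₂_of_not_collinear habc)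
    hac.left_mem hb' hac.right_mem ha hb hc with hca | hcb
  · exact ne₁₃_of_not_collinear habc hca.symm
  · exact ne₂₃_of_not_collinear habc hcb.symm

end EuclideanGeometry

/-- A pair of parallel, equal-length chords of a circle are opposite sides of a rectangle
inscribed in that circle: the segments `a–c` and `b–d` are diameters (their midpoints are
the center), the diagonals are equal, and the angle at `b` is right. -/
theorem parallel_equal_chords_form_rectangle
    (o a b c d : E)
    (h1 : dist o a = dist o b) (h2 : dist o b = dist o c) (h3 : dist o c = dist o d)
    (hpar : b - a = c - d)
    (hncol : ¬ Collinear ℝ ({a, b, c} : Set E)) :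
    midpoint ℝ a c = o ∧ midpoint ℝ b d = o ∧ dist a c = dist b d ∧
      (inner ℝ (a - b) (c - b) : ℝ) = 0 := by
  let s : EuclideanGeometry.Sphere E := ⟨o, dist o a⟩
  have ha : a ∈ s := EuclideanGeometry.mem_sphere'.2 rfl
  have hb : b ∈ s := EuclideanGeometry.mem_sphere'.2 h1.symm
  have hc : c ∈ s := EuclideanGeometry.mem_sphere'.2 (h1.trans h2).symm
  have hd : d ∈ s := EuclideanGeometry.mem_sphere'.2 (h1.trans (h2.trans h3)).symm
  have hm : midpoint ℝ b d = midpoint ℝ a c := (midpoint_eq_midpoint_iff_vsub_eq_vsub ℝ).2 hpar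
  have hac : s.IsDiameter a c :=
    EuclideanGeometry.Sphere.isDiameter_of_midpoint_eq_of_not_collinear
      finrank_euclideanSpace_fin ha hb hc hd hm hncol
  have hbd : s.IsDiameter b d := ⟨hb, hm.trans hac.midpoint_eq_center⟩
  refine ⟨hac.midpoint_eq_center, hbd.midpoint_eq_center,
    by rw [hac.dist_left_right, hbd.dist_left_right], ?_⟩
  exact InnerProductGeometry.inner_eq_zero_iff_angle_eq_pi_div_two _ _ |>.2 <|
    (EuclideanGeometry.Sphere.thales_theorem hac).2 hb
end

section
/- Let o, m be points of the Euclidean plane E, let r > 0, and let S be a set of points contained in the sphere Metric.sphere o r with at least three elements. If the point reflection about m maps S onto itself ((Equiv.pointReflection m) '' S = S), then m = o. -/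
/-!
The point reflection `R` about `m` is an isometric involution, so for `x ∈ S` we get
`dist x (R o) = dist (R x) o = r = dist x o`: every point of `S` lies on the perpendicular
bisector of `o` and `R o`. If `m ≠ o` then `R o ≠ o`, and in the plane this bisector is a line;
but a line meets a circle in at most two points.
-/

open EuclideanGeometry AffineSubspace Module

section PointReflection

variable {V P : Type*} [SeminormedAddCommGroup V] [PseudoMetricSpace P] [NormedAddTorsor V P]

theorem dist_pointReflection_pointReflection (m x y : P) :
    dist (Equiv.pointReflection m x) (Equiv.pointReflection m y) = dist x y := by
  simp only [Equiv.pointReflection_apply, dist_vadd_cancel_right, dist_vsub_cancel_left]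

theorem dist_pointReflection_eq_dist_pointReflection (m x y : P) :
    dist (Equiv.pointReflection m x) y = dist x (Equiv.pointReflection m y) := by
  rw [← dist_pointReflection_pointReflection m, Equiv.pointReflection_involutive m x]

end PointReflection

variable {V P : Type*} [NormedAddCommGroup V] [InnerProductSpace ℝ V] [MetricSpace P]
  [NormedAddTorsor V P]

theorem subset_perpBisector_of_mapsTo_pointReflection {S : Set P} {o m : P} {r : ℝ}
    (hS : S ⊆ Metric.sphere o r) (hsym : Set.MapsTo (Equiv.pointReflection m) S S) :
    S ⊆ perpBisector o (Equiv.pointReflection m o) := fun x hx => by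
  rw [SetLike.mem_coe, mem_perpBisector_iff_dist_eq,
    ← dist_pointReflection_eq_dist_pointReflection, hS hx, hS (hsym hx)]

theorem AffineSubspace.collinear_perpBisector [Fact (finrank ℝ V = 2)] {p₁ p₂ : P}
    (h : p₁ ≠ p₂) : Collinear ℝ (perpBisector p₁ p₂ : Set P) := by
  have : FiniteDimensional ℝ V := .of_fact_finrank_eq_two
  rw [collinear_iff_finrank_le_one, ← direction_eq_vectorSpan, direction_perpBisector,
    Submodule.finrank_orthogonal_span_singleton (_i := ‹Fact (finrank ℝ V = 2)›)
      (vsub_ne_zero.2 h.symm)]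

theorem EuclideanGeometry.Cospherical.encard_le_two_of_collinear {s : Set P}
    (hs : Cospherical s) (hc : Collinear ℝ s) : s.encard ≤ 2 := by
  by_contra! h
  obtain ⟨t, hts, ht⟩ := Set.exists_subset_encard_eq (Order.add_one_le_of_lt h)
  obtain ⟨a, b, c, hab, hac, hbc, rfl⟩ := Set.encard_eq_three.1 ht
  exact affineIndependent_iff_not_collinear_set.1
    ((hs.subset hts).affineIndependent_of_ne hab hac hbc) (hc.subset hts)

theorem pointReflection_fixed_point_eq_center_general
    (o m : E) (r : ℝ) (S : Set E)
    (hS : S ⊆ Metric.sphere o r) (hcard : 3 ≤ S.encard)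
    (hsym : (Equiv.pointReflection m) '' S = S) :
    m = o := by
  have : Fact (finrank ℝ E = 2) := ⟨finrank_euclideanSpace_fin⟩
  by_contra hmo
  have hreflect : Equiv.pointReflection m o ≠ o :=
    (AffineEquiv.pointReflection_fixed_iff_of_module ℝ).not.2 (Ne.symm hmo)
  have hcol : Collinear ℝ S := (collinear_perpBisector hreflect.symm).subset
    (subset_perpBisector_of_mapsTo_pointReflection hS (Set.mapsTo_iff_image_subset.2 hsym.le))
  have htwo : S.encard ≤ 2 := Cospherical.encard_le_two_of_collinear ⟨o, r, hS⟩ hcol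
  exact absurd (hcard.trans htwo) (by norm_num)

/-- If a set of at least three points on a circle is mapped onto itself by the point
reflection about `m`, then `m` is the center of the circle. -/
theorem pointReflection_fixed_point_eq_center
    (o m : E) (r : ℝ) (hr : 0 < r) (S : Set E)
    (hS : S ⊆ Metric.sphere o r) (hcard : 3 ≤ S.encard)
    (hsym : (Equiv.pointReflection m) '' S = S) :
    m = o :=
  pointReflection_fixed_point_eq_center_general o m r S hS hcard hsym
end

section
/- Inscribed polygon setup: let n ≥ 3, o : E, ρ > 0, and let α : Fin n → ℝ be strictly increasing with α (n−1) − α 0 < 2π; define vertices v : ZMod n → E by v k = o + ρ • (Real.cos (α k̄), Real.sin (α k̄)), where k̄ ∈ {0, …, n−1} is the canonical representative of k. Suppose the point reflection about o maps the vertex set onto itself: (Equiv.pointReflection o) '' Set.range v = Set.range v. Then n is even, and for every i : ZMod n one has v (i + n/2) = Equiv.pointReflection o (v i) = 2•o − v i; consequently, for every i, the edge from v (i + n/2) to v (i + n/2 + 1) is parallel and of equal length to the edge from v i to v (i+1), with opposite orientation: v (i + n/2 + 1) − v (i + n/2) = −(v (i+1) − v i). -/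
open Real Set

noncomputable def circlePoint (o : E) (ρ θ : ℝ) : E :=
  o + ρ • WithLp.toLp 2 ![cos θ, sin θ]

theorem Equiv.pointReflection_eq_two_nsmul_sub {G : Type*} [AddCommGroup G] (o x : G) :
    Equiv.pointReflection o x = (2 : ℕ) • o - x := by
  rw [Equiv.pointReflection_apply, vsub_eq_sub, vadd_eq_add, two_nsmul]
  abel

theorem coe_angle_eq_of_circlePoint_eq {o : E} {ρ θ ψ : ℝ} (hρ : ρ ≠ 0)
    (h : circlePoint o ρ θ = circlePoint o ρ ψ) : (θ : Angle) = ψ := by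
  have h' := WithLp.toLp_injective 2 (smul_right_injective E hρ (add_left_cancel h))
  exact Angle.cos_sin_inj (by simpa using congrFun h' 0) (by simpa using congrFun h' 1)

theorem pointReflection_circlePoint (o : E) (ρ θ : ℝ) :
    Equiv.pointReflection o (circlePoint o ρ θ) = circlePoint o ρ (θ + π) := by
  have : ![cos (θ + π), sin (θ + π)] = -![cos θ, sin θ] := by
    simp [cos_add_pi, sin_add_pi]
  rw [Equiv.pointReflection_eq_two_nsmul_sub, circlePoint, circlePoint, this, WithLp.toLp_neg,
    smul_neg, two_nsmul]
  abel

theorem Real.Angle.injOn_coe_Ico (c : ℝ) : InjOn ((↑) : ℝ → Angle) (Ico c (c + 2 * π)) :=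
  fun _ hx _ hy h => by
    have : Fact (0 < 2 * π) := ⟨two_pi_pos⟩
    exact (AddCircle.coe_eq_coe_iff_of_mem_Ico hx hy).1 h

theorem eq_add_pi_of_coe_angle_eq {c θ ψ : ℝ} (hθ : θ ∈ Ico c (c + 2 * π))
    (hψ : ψ ∈ Ico c (c + π)) (h : (θ : Angle) = ↑(ψ + π)) : θ = ψ + π :=
  Angle.injOn_coe_Ico c hθ ⟨by linarith [hψ.1, pi_pos], by linarith [hψ.2]⟩ h

theorem eq_sub_pi_of_coe_angle_eq {c θ ψ : ℝ} (hθ : θ ∈ Ico c (c + 2 * π))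
    (hψ : ψ ∈ Ico (c + π) (c + 2 * π)) (h : (θ : Angle) = ↑(ψ + π)) : θ = ψ - π :=
  Angle.injOn_coe_Ico c hθ ⟨by linarith [hψ.1], by linarith [hψ.2, pi_pos]⟩
    (by rw [h, Angle.coe_add, Angle.coe_sub, sub_eq_add_neg, Angle.neg_coe_pi])

theorem Fin.eq_add_of_mapsTo_Iio_Ici {n : ℕ} [NeZero n] {σ : Fin n → Fin n} {m : Fin n}
    (hlow : MapsTo σ (Iio m) (Ici m)) (hhigh : MapsTo σ (Ici m) (Iio m))
    (hmono_low : StrictMonoOn σ (Iio m)) (hmono_high : StrictMonoOn σ (Ici m)) (a : Fin n) :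
    σ a = a + m := by
  have hrot : StrictMono fun a => σ a - m := by
    intro a b hab
    rw [Fin.lt_def]
    rcases lt_or_ge b m with hb | hb
    · have ha : a < m := hab.trans hb
      rw [Fin.coe_sub_iff_le.2 (hlow ha), Fin.coe_sub_iff_le.2 (hlow hb)]
      exact Nat.sub_lt_sub_right (hlow ha) (hmono_low ha hb hab)
    rcases lt_or_ge a m with ha | ha
    · rw [Fin.coe_sub_iff_le.2 (hlow ha), Fin.coe_sub_iff_lt.2 (hhigh hb)]
      have := (σ a).isLt
      omega
    · rw [Fin.coe_sub_iff_lt.2 (hhigh ha), Fin.coe_sub_iff_lt.2 (hhigh hb)]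
      have := Fin.lt_def.1 (hmono_high ha hb hab)
      have := Fin.lt_def.1 (hhigh hb)
      omega
  exact sub_eq_iff_eq_add.1 (congrFun hrot.eq_id a)

theorem eq_add_of_coe_angle_eq_add_pi {n : ℕ} [NeZero n] {α : Fin n → ℝ} (hα : StrictMono α)
    (hspan : ∀ k, α k < α 0 + 2 * π) {σ : Fin n → Fin n}
    (hσ : ∀ a, (α (σ a) : Angle) = ↑(α a + π)) :
    n = 2 * (σ 0 : ℕ) ∧ ∀ a, σ a = a + σ 0 := by
  have hmem : ∀ k, α k ∈ Ico (α 0) (α 0 + 2 * π) :=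
    fun k => ⟨hα.monotone (Fin.zero_le k), hspan k⟩
  have hlow : ∀ a, α a < α 0 + π → α (σ a) = α a + π := fun a ha =>
    eq_add_pi_of_coe_angle_eq (hmem _) ⟨(hmem a).1, ha⟩ (hσ a)
  have hhigh : ∀ a, α 0 + π ≤ α a → α (σ a) = α a - π := fun a ha =>
    eq_sub_pi_of_coe_angle_eq (hmem _) ⟨ha, (hmem a).2⟩ (hσ a)
  have hσ0 : α (σ 0) = α 0 + π := hlow 0 (lt_add_of_pos_right _ pi_pos)
  have hshift : ∀ a, σ a = a + σ 0 := by
    refine Fin.eq_add_of_mapsTo_Iio_Ici (fun a ha => ?_) (fun a ha => ?_)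
      (fun a ha b hb hab => ?_) (fun a ha b hb hab => ?_)
    · have ha' : α a < α 0 + π := hσ0 ▸ hα ha
      exact hα.le_iff_le.1 (by rw [hσ0, hlow a ha']; linarith [(hmem a).1])
    · have ha' : α 0 + π ≤ α a := hσ0 ▸ hα.monotone ha
      exact hα.lt_iff_lt.1 (by rw [hσ0, hhigh a ha']; linarith [(hmem a).2])
    · rw [← hα.lt_iff_lt, hlow a (hσ0 ▸ hα ha), hlow b (hσ0 ▸ hα hb)]
      linarith [hα hab]
    · rw [← hα.lt_iff_lt, hhigh a (hσ0 ▸ hα.monotone ha), hhigh b (hσ0 ▸ hα.monotone hb)]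
      linarith [hα hab]
  have hσσ : σ (σ 0) = 0 := hα.injective (by rw [hhigh _ hσ0.ge, hσ0, add_sub_cancel_right])
  have hσ0_ne : (σ 0 : ℕ) ≠ 0 := fun h => by
    have := congrArg α (Fin.val_eq_zero_iff.1 h)
    linarith [pi_pos]
  have hdvd : n ∣ 2 * σ 0 := by
    have := congrArg Fin.val ((hshift (σ 0)).symm.trans hσσ)
    rw [Fin.val_add, Fin.val_zero, ← two_mul] at this
    exact Nat.dvd_of_mod_eq_zero this
  exact ⟨(Nat.eq_of_dvd_of_lt_two_mul (by omega) hdvd (by omega)).symm, hshift⟩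

/-- In a skew symmetric inscribed polygon (vertex set mapped onto itself by the point
reflection about the center `o`), the number of vertices is even, the antipode of the
vertex `v i` is `v (i + n/2)`, and every edge has a parallel edge of equal length with
opposite orientation. -/
theorem skew_symmetric_inscribed_polygon_antipodal_edges
    (n : ℕ) (hn : 3 ≤ n) (o : E) (ρ : ℝ) (hρ : 0 < ρ)
    (α : Fin n → ℝ) (hα : StrictMono α)
    (hspan : α ⟨n - 1, by omega⟩ - α ⟨0, by omega⟩ < 2 * Real.pi)
    (v : ZMod n → E)
    (hv : ∀ k : Fin n, v ((k : ℕ) : ZMod n) =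
      o + ρ • (WithLp.equiv 2 (Fin 2 → ℝ)).symm ![Real.cos (α k), Real.sin (α k)])
    (hsym : (Equiv.pointReflection o) '' Set.range v = Set.range v) :
    Even n ∧ ∀ i : ZMod n,
      v (i + ((n / 2 : ℕ) : ZMod n)) = Equiv.pointReflection o (v i) ∧
      Equiv.pointReflection o (v i) = (2 : ℕ) • o - v i ∧
      v (i + ((n / 2 : ℕ) : ZMod n) + 1) - v (i + ((n / 2 : ℕ) : ZMod n)) =
        -(v (i + 1) - v i) := by
  have : NeZero n := ⟨by omega⟩
  have hvk : ∀ k : Fin n, v (k : ℕ) = circlePoint o ρ (α k) := hv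
  have hvi : ∀ i : ZMod n, v i = circlePoint o ρ (α ⟨i.val, i.val_lt⟩) := fun i => by
    rw [← hvk, ZMod.natCast_zmod_val]
  have hspan' : ∀ k, α k < α 0 + 2 * π := fun k => by
    have : α k ≤ α ⟨n - 1, by omega⟩ := hα.monotone (Fin.le_def.2 (Nat.le_sub_one_of_lt k.isLt))
    have h0 : α ⟨0, by omega⟩ = α 0 := rfl
    linarith
  have hanti : ∀ a : Fin n, ∃ b : Fin n,
      circlePoint o ρ (α b) = Equiv.pointReflection o (circlePoint o ρ (α a)) := fun a => by
    obtain ⟨i, hi⟩ : Equiv.pointReflection o (v a) ∈ Set.range v :=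
      hsym ▸ Set.mem_image_of_mem _ (Set.mem_range_self _)
    exact ⟨⟨i.val, i.val_lt⟩, by rw [← hvi, hi, hvk]⟩
  choose σ hσ using hanti
  obtain ⟨hn2, hshift⟩ := eq_add_of_coe_angle_eq_add_pi hα hspan' fun a =>
    coe_angle_eq_of_circlePoint_eq hρ.ne' ((hσ a).trans (pointReflection_circlePoint o ρ (α a)))
  have key : ∀ i : ZMod n, v (i + ((n / 2 : ℕ) : ZMod n)) = Equiv.pointReflection o (v i) := by
    intro i
    have hi : i + ((n / 2 : ℕ) : ZMod n) = ((σ ⟨i.val, i.val_lt⟩ : ℕ) : ZMod n) := by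
      rw [hshift, Fin.val_add, ZMod.natCast_mod, Nat.cast_add, ZMod.natCast_zmod_val,
        show n / 2 = σ 0 by omega]
    rw [hi, hvk, hσ, ← hvi]
  refine ⟨⟨σ 0, by omega⟩, fun i => ⟨key i, Equiv.pointReflection_eq_two_nsmul_sub o (v i), ?_⟩⟩
  rw [add_right_comm, key, key, Equiv.pointReflection_eq_two_nsmul_sub,
    Equiv.pointReflection_eq_two_nsmul_sub]
  abel
end
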